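/- Let k be bounded, symmetric, and satisfy k(v,v') ≥ c > 0 for all v, v'. Then the null space of the collision operator L consists exactly of the constant functions: L f = 0 (a.e.) if and only if f equals its velocity average ⟨f⟩ almost everywhere on S^{d-1}. -/

import Mathlib

open MeasureTheory

/-- The surface measure on the unit sphere `S^{d-1} ⊂ ℝ^d`. -/
noncomputable def sphμ (d : ℕ) : Measure (Metric.sphere (0 : EuclideanSpace ℝ (Fin d)) 1) :=
  (volume : Measure (EuclideanSpace ℝ (Fin d))).toSphere

/-- The velocity average `⟨h⟩ = (1/|S^{d-1}|) ∫_{S^{d-1}} h`. -/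
noncomputable def sAvg {d : ℕ} (h : Metric.sphere (0 : EuclideanSpace ℝ (Fin d)) 1 → ℝ) : ℝ :=
  ((sphμ d) Set.univ).toReal⁻¹ * ∫ v, h v ∂(sphμ d)

/-! Entropy (Dirichlet form) argument: for symmetric `k`,
`∫∫ k(v,v') (f v' - f v)² = -2 ∫ f(v) ∫ k(v,v') (f v' - f v) dv' dv`, so `L f = 0` a.e. makes the
left side vanish; as `k > 0`, `f v' = f v` for almost every pair `(v, v')`, i.e. `f` is a.e.
constant. -/

namespace MeasureTheory

variable {α : Type*} [MeasurableSpace α] {μ : Measure α}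

noncomputable def collisionOp (μ : Measure α) (k : α → α → ℝ) (f : α → ℝ) (v : α) : ℝ :=
  ⨍ v', k v v' * (f v' - f v) ∂μ

theorem integrable_mul_mul_of_memLp_two {K F G : α → ℝ} (hK : AEStronglyMeasurable K μ)
    {C : ℝ} (hKC : ∀ x, |K x| ≤ C) (hF : MemLp F 2 μ) (hG : MemLp G 2 μ) :
    Integrable (fun x => K x * (F x * G x)) μ :=
  (hF.integrable_mul hG).bdd_mul hK (Filter.Eventually.of_forall hKC)

theorem ae_collisionOp_eq_zero_of_ae_eq_const {k : α → α → ℝ} {f : α → ℝ} {a : ℝ}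
    (hf : ∀ᵐ v ∂μ, f v = a) : ∀ᵐ v ∂μ, collisionOp μ k f v = 0 := by
  filter_upwards [hf] with v hv
  rw [collisionOp, average_congr (g := fun _ => 0), average_zero]
  filter_upwards [hf] with v' hv'
  simp [hv, hv']

section Kernel

variable [IsFiniteMeasure μ] {k : α → α → ℝ} {f : α → ℝ}

theorem integral_kernel_mul_sub_sq_eq_neg_two_mul (hk_symm : ∀ v v', k v v' = k v' v)
    (hk_meas : AEStronglyMeasurable (Function.uncurry k) (μ.prod μ)) {C : ℝ}
    (hkC : ∀ v v', |k v v'| ≤ C) (hf : MemLp f 2 μ) :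
    ∫ p, k p.1 p.2 * (f p.2 - f p.1) ^ 2 ∂(μ.prod μ)
      = -2 * ∫ v, f v * ∫ v', k v v' * (f v' - f v) ∂μ ∂μ := by
  set A : α × α → ℝ := fun p => k p.1 p.2 * (f p.1 * (f p.2 - f p.1))
  have hA : Integrable A (μ.prod μ) :=
    integrable_mul_mul_of_memLp_two hk_meas (fun p => hkC p.1 p.2) (hf.comp_fst μ)
      ((hf.comp_snd μ).sub (hf.comp_fst μ))
  -- Swapping `v` and `v'` turns the `f v'`-half of the square into a copy of the `f v`-half.
  have h_split : (fun p : α × α => k p.1 p.2 * (f p.2 - f p.1) ^ 2)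
      = fun p => -A p - A p.swap := by
    funext p
    simp only [A, Prod.fst_swap, Prod.snd_swap, hk_symm p.2 p.1]
    ring
  have h_fubini : ∫ p, A p ∂(μ.prod μ) = ∫ v, f v * ∫ v', k v v' * (f v' - f v) ∂μ ∂μ := by
    rw [integral_prod A hA]
    simp only [A, mul_left_comm (k _ _), integral_const_mul]
  rw [h_split, integral_sub (f := fun p => -A p) (g := fun p => A p.swap) hA.neg hA.swap,
    integral_neg, integral_prod_swap A, h_fubini]
  ring

theorem ae_eq_average_of_ae_prod [NeZero μ] (h : ∀ᵐ p ∂(μ.prod μ), f p.2 = f p.1) :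
    ∀ᵐ v ∂μ, f v = ⨍ v', f v' ∂μ := by
  filter_upwards [Measure.ae_ae_of_ae_prod h] with v hv
  rw [average_congr hv, average_const]

theorem ae_eq_average_of_ae_collisionOp_eq_zero (hk_symm : ∀ v v', k v v' = k v' v)
    (hk_meas : AEStronglyMeasurable (Function.uncurry k) (μ.prod μ)) {C : ℝ}
    (hkC : ∀ v v', |k v v'| ≤ C) (hk_pos : ∀ v v', 0 < k v v') (hf : MemLp f 2 μ)
    (hLf : ∀ᵐ v ∂μ, collisionOp μ k f v = 0) :
    ∀ᵐ v ∂μ, f v = ⨍ v', f v' ∂μ := by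
  rcases eq_zero_or_neZero μ with rfl | hμ
  · simp
  have h_inner : ∀ᵐ v ∂μ, ∫ v', k v v' * (f v' - f v) ∂μ = 0 := by
    filter_upwards [hLf] with v hv
    simpa [collisionOp, average_eq, measureReal_univ_ne_zero] using hv
  have h_energy : ∫ p, k p.1 p.2 * (f p.2 - f p.1) ^ 2 ∂(μ.prod μ) = 0 := by
    rw [integral_kernel_mul_sub_sq_eq_neg_two_mul hk_symm hk_meas hkC hf, integral_eq_zero_of_ae]
    · ring
    · filter_upwards [h_inner] with v hv
      simp [hv]
  have h_int : Integrable (fun p : α × α => k p.1 p.2 * (f p.2 - f p.1) ^ 2) (μ.prod μ) := by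
    have hg : MemLp (fun p : α × α => f p.2 - f p.1) 2 (μ.prod μ) :=
      (hf.comp_snd μ).sub (hf.comp_fst μ)
    simp only [sq]
    exact integrable_mul_mul_of_memLp_two hk_meas (fun p => hkC p.1 p.2) hg hg
  have h_nonneg : 0 ≤ fun p : α × α => k p.1 p.2 * (f p.2 - f p.1) ^ 2 :=
    fun p => mul_nonneg (hk_pos p.1 p.2).le (sq_nonneg _)
  apply ae_eq_average_of_ae_prod
  filter_upwards [(integral_eq_zero_iff_of_nonneg h_nonneg h_int).1 h_energy] with p hp
  have h_sq := (mul_eq_zero.1 hp).resolve_left (hk_pos p.1 p.2).ne'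
  exact sub_eq_zero.1 (pow_eq_zero_iff two_ne_zero |>.1 h_sq)

theorem ae_collisionOp_eq_zero_iff (hk_symm : ∀ v v', k v v' = k v' v)
    (hk_meas : AEStronglyMeasurable (Function.uncurry k) (μ.prod μ)) {C : ℝ}
    (hkC : ∀ v v', |k v v'| ≤ C) (hk_pos : ∀ v v', 0 < k v v') (hf : MemLp f 2 μ) :
    (∀ᵐ v ∂μ, collisionOp μ k f v = 0) ↔ ∀ᵐ v ∂μ, f v = ⨍ v', f v' ∂μ :=
  ⟨ae_eq_average_of_ae_collisionOp_eq_zero hk_symm hk_meas hkC hk_pos hf,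
    ae_collisionOp_eq_zero_of_ae_eq_const⟩

end Kernel

end MeasureTheory

instance isFiniteMeasure_sphμ (d : ℕ) : IsFiniteMeasure (sphμ d) := by
  unfold sphμ; infer_instance

theorem sAvg_eq_average {d : ℕ} (h : Metric.sphere (0 : EuclideanSpace ℝ (Fin d)) 1 → ℝ) :
    sAvg h = ⨍ v, h v ∂(sphμ d) := by
  rw [average_eq, smul_eq_mul]
  rfl

theorem stmt6_general (d : ℕ)
    (k : Metric.sphere (0 : EuclideanSpace ℝ (Fin d)) 1 →
         Metric.sphere (0 : EuclideanSpace ℝ (Fin d)) 1 → ℝ)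
    (hk_meas : Measurable (Function.uncurry k))
    (hk_bdd : ∃ C : ℝ, ∀ v v', k v v' ≤ C)
    (hk_symm : ∀ v v', k v v' = k v' v)
    (c : ℝ) (hc : 0 < c) (hk_pos : ∀ v v', c ≤ k v v')
    (f : Metric.sphere (0 : EuclideanSpace ℝ (Fin d)) 1 → ℝ)
    (hf : MemLp f 2 (sphμ d)) :
    (∀ᵐ v ∂(sphμ d), sAvg (fun v' => k v v' * (f v' - f v)) = 0)
      ↔ (∀ᵐ v ∂(sphμ d), f v = sAvg f) := by
  obtain ⟨C, hC⟩ := hk_bdd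
  have hk_pos' : ∀ v v', 0 < k v v' := fun v v' => hc.trans_le (hk_pos v v')
  have hkC : ∀ v v', |k v v'| ≤ C := fun v v' =>
    abs_le.2 ⟨by linarith [hk_pos' v v', hC v v'], hC v v'⟩
  simpa only [sAvg_eq_average, collisionOp] using
    ae_collisionOp_eq_zero_iff hk_symm hk_meas.aestronglyMeasurable hkC hk_pos' hf

/-- If `k` is bounded, symmetric and uniformly positive (`k ≥ c > 0`), the null space of the
collision operator `L` consists exactly of the constant functions:
`L f = 0` a.e. iff `f = ⟨f⟩` a.e. on `S^{d-1}`. -/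
theorem stmt6 (d : ℕ) (hd : 0 < d)
    (k : Metric.sphere (0 : EuclideanSpace ℝ (Fin d)) 1 →
         Metric.sphere (0 : EuclideanSpace ℝ (Fin d)) 1 → ℝ)
    (hk_meas : Measurable (Function.uncurry k))
    (hk_bdd : ∃ C : ℝ, ∀ v v', k v v' ≤ C)
    (hk_symm : ∀ v v', k v v' = k v' v)
    (c : ℝ) (hc : 0 < c) (hk_pos : ∀ v v', c ≤ k v v')
    (f : Metric.sphere (0 : EuclideanSpace ℝ (Fin d)) 1 → ℝ)
    (hf : MemLp f 2 (sphμ d)) :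
    (∀ᵐ v ∂(sphμ d), sAvg (fun v' => k v v' * (f v' - f v)) = 0)
      ↔ (∀ᵐ v ∂(sphμ d), f v = sAvg f) :=
  stmt6_general d k hk_meas hk_bdd hk_symm c hc hk_pos f hf
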